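/- Let T : ℝ → ℝ be defined by T(x) = x/(1-x) if x ≤ 1/2 and T(x) = (2x-1)/x if x > 1/2, and for b ≥ 1 let φ_b = (√(b²+4) - b)/2. The period-2b orbit of φ_b under T consists of the following quadratic irrationals: T^[j](φ_b) = φ_b/(1 - j·φ_b) for every j with 0 ≤ j ≤ b-1; T^[b](φ_b) = 1 - φ_b; and T^[b+j](φ_b) = (1 - (j+1)·φ_b)/(1 - j·φ_b) for every j with 1 ≤ j ≤ b-1. -/

import Mathlib

noncomputable def T : ℝ → ℝ := fun x => if x ≤ 1/2 then x / (1 - x) else (2*x - 1) / x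

/-!
Write `φ = φ_b`, so that `φ² + bφ = 1`. On the left branch `T` acts as the Möbius map
`x ↦ x/(1-x)`, which sends `φ/(1 - tφ)` to `φ/(1 - (t+1)φ)`; on the right branch it acts as
`x ↦ 2 - 1/x`, which sends `(1 - (t+1)φ)/(1 - tφ)` to `(1 - (t+2)φ)/(1 - (t+1)φ)`. Both stay on
their branch as long as `(t+2)φ < 1`, which holds for `t ≤ b - 2` because `bφ = 1 - φ² < 1`.
The switch happens at `T^[b-1] φ = φ/(1 - (b-1)φ) = 1/(1+φ) > 1/2`, whose image is `1 - φ`.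
-/

theorem T_of_le {x : ℝ} (hx : x ≤ 1 / 2) : T x = x / (1 - x) := if_pos hx

theorem T_of_gt {x : ℝ} (hx : 1 / 2 < x) : T x = (2 * x - 1) / x := if_neg hx.not_ge

theorem T_div_one_sub_mul {φ t : ℝ} (hφ : 0 < φ) (h : (t + 2) * φ ≤ 1) :
    T (φ / (1 - t * φ)) = φ / (1 - (t + 1) * φ) := by
  have hd : 0 < 1 - t * φ := by nlinarith
  have hsub : 1 - φ / (1 - t * φ) = (1 - (t + 1) * φ) / (1 - t * φ) := by
    rw [eq_div_iff hd.ne', sub_mul, div_mul_cancel₀ _ hd.ne']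
    ring
  rw [T_of_le (by rw [div_le_iff₀ hd]; linarith), hsub, div_div_div_cancel_right₀ hd.ne']

theorem iterate_T_eq_div {φ : ℝ} (hφ : 0 < φ) {j : ℕ} (hj : ((j : ℝ) + 1) * φ ≤ 1) :
    T^[j] φ = φ / (1 - j * φ) := by
  induction j with
  | zero => simp
  | succ n ih =>
    push_cast at hj ⊢
    rw [Function.iterate_succ_apply', ih (by nlinarith), T_div_one_sub_mul hφ (by linarith)]

theorem T_one_sub_mul_div {φ t : ℝ} (hφ : 0 < φ) (h : (t + 2) * φ < 1) :
    T ((1 - (t + 1) * φ) / (1 - t * φ)) = (1 - (t + 2) * φ) / (1 - (t + 1) * φ) := by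
  have hd : 0 < 1 - t * φ := by nlinarith
  rw [T_of_gt (by rw [lt_div_iff₀ hd]; linarith)]
  field_simp
  ring

theorem iterate_T_one_sub {φ : ℝ} (hφ : 0 < φ) {j : ℕ} (hj : ((j : ℝ) + 1) * φ < 1) :
    T^[j] (1 - φ) = (1 - (j + 1) * φ) / (1 - j * φ) := by
  induction j with
  | zero => simp
  | succ n ih =>
    push_cast at hj ⊢
    rw [Function.iterate_succ_apply', ih (by nlinarith), T_one_sub_mul_div hφ (by linarith)]
    ring_nf

theorem iterate_T_of_sq_add_mul_eq_one {φ : ℝ} (hφ : 0 < φ) {b : ℕ} (hb : 1 ≤ b)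
    (hroot : φ ^ 2 + b * φ = 1) : T^[b] φ = 1 - φ := by
  obtain ⟨m, rfl⟩ : ∃ m, b = m + 1 := ⟨b - 1, by omega⟩
  push_cast at hroot
  have hφ1 : φ < 1 := by nlinarith
  have hpivot : T^[m] φ = 1 / (1 + φ) := by
    rw [iterate_T_eq_div hφ (by nlinarith)]
    have hden : 1 - m * φ = φ * (1 + φ) := by linarith
    rw [hden]
    field_simp
  rw [Function.iterate_succ_apply', hpivot,
    T_of_gt (by rw [lt_div_iff₀ (by linarith)]; linarith)]
  field_simp
  ring

noncomputable def metallicFrac (b : ℝ) : ℝ := (√(b ^ 2 + 4) - b) / 2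

theorem metallicFrac_sq_add_mul (b : ℝ) : metallicFrac b ^ 2 + b * metallicFrac b = 1 := by
  have hs : √(b ^ 2 + 4) ^ 2 = b ^ 2 + 4 := Real.sq_sqrt (by positivity)
  unfold metallicFrac
  linear_combination hs / 4

theorem metallicFrac_pos (b : ℝ) : 0 < metallicFrac b := by
  have hb : b < √(b ^ 2 + 4) := Real.lt_sqrt_of_sq_lt (by linarith)
  unfold metallicFrac
  linarith

theorem stmt8 (b : ℕ) (hb : 1 ≤ b) :
    let φ : ℝ := (Real.sqrt ((b : ℝ)^2 + 4) - b) / 2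
    (∀ j : ℕ, j ≤ b - 1 → T^[j] φ = φ / (1 - (j : ℝ) * φ)) ∧
    T^[b] φ = 1 - φ ∧
    (∀ j : ℕ, 1 ≤ j → j ≤ b - 1 →
      T^[b + j] φ = (1 - ((j : ℝ) + 1) * φ) / (1 - (j : ℝ) * φ)) := by
  intro φ
  have hφ : 0 < φ := metallicFrac_pos b
  have hroot : φ ^ 2 + b * φ = 1 := metallicFrac_sq_add_mul b
  have hsmall : ∀ j : ℕ, j ≤ b - 1 → ((j : ℝ) + 1) * φ < 1 := fun j hj => by
    have : (j : ℝ) + 1 ≤ b := by exact_mod_cast (by omega : j + 1 ≤ b)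
    nlinarith
  have hpivot : T^[b] φ = 1 - φ := iterate_T_of_sq_add_mul_eq_one hφ hb hroot
  refine ⟨fun j hj => iterate_T_eq_div hφ (hsmall j hj).le, hpivot, fun j _ hj => ?_⟩
  rw [add_comm, Function.iterate_add_apply, hpivot, iterate_T_one_sub hφ (hsmall j hj)]
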